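/- arXiv:1907.13208 — 2 statements merged into one kernel-verified Lean document; each statement's English description precedes it below -/
import Mathlib

section
/- Let X be an ℝ^d-valued random vector and Y a {0,1}-valued random variable defined on the same probability space, and for each pair define the Bayes error L*(X,Y) = inf over all Borel-measurable classifiers g : ℝ^d → {0,1} of P(g(X) ≠ Y). Suppose T_m : ℝ^d → ℝ^d, m = 1, 2, …, is a sequence of Borel-measurable transformations such that ‖T_m(X) − X‖ → 0 in probability as m → ∞, where ‖·‖ is the Euclidean norm on ℝ^d. Then the Bayes error of the transformed pair converges to the Bayes error of the original pair: L*(T_m(X), Y) → L*(X, Y) as m → ∞. -/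
open MeasureTheory Filter

/-- The Bayes error of the pair `(X, Y)`: the infimum, over all Borel-measurable classifiers
`g : ℝ^d → {0,1}`, of the probability of misclassification `P(g(X) ≠ Y)`. -/
noncomputable def bayesError {Ω : Type*} [MeasurableSpace Ω] (μ : Measure Ω) {d : ℕ}
    (X : Ω → EuclideanSpace ℝ (Fin d)) (Y : Ω → Bool) : ENNReal :=
  ⨅ g : {g : EuclideanSpace ℝ (Fin d) → Bool // Measurable g},
    μ {ω | g.1 (X ω) ≠ Y ω}

/-- A connected set meeting both a set and its complement meets its frontier. -/
lemma aux_inter_frontier_nonempty {α : Type*} [TopologicalSpace α] {s t : Set α}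
    (hs : IsPreconnected s) (h1 : (s ∩ t).Nonempty) (h2 : (s \ t).Nonempty) :
    (s ∩ frontier t).Nonempty := by
  by_contra h
  rw [Set.not_nonempty_iff_eq_empty] at h
  have hdisj : ∀ x ∈ s, x ∉ frontier t := by
    intro x hx hxf
    exact absurd (Set.mem_inter hx hxf) (by rw [h]; exact Set.notMem_empty x)
  have key := hs (interior t) (closure t)ᶜ isOpen_interior isClosed_closure.isOpen_compl
    (fun x hx => by
      by_cases hxc : x ∈ closure t
      · by_cases hxi : x ∈ interior t
        · exact Or.inl hxi
        · exact absurd ⟨hxc, hxi⟩ (hdisj x hx)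
      · exact Or.inr hxc)
    (by
      obtain ⟨x, hxs, hxt⟩ := h1
      refine ⟨x, hxs, ?_⟩
      by_contra hxi
      exact hdisj x hxs ⟨subset_closure hxt, hxi⟩)
    (by
      obtain ⟨x, hxs, hxt⟩ := h2
      refine ⟨x, hxs, ?_⟩
      by_contra hxc
      replace hxc := Set.notMem_compl_iff.mp hxc
      have hxi : x ∉ interior t := fun hxi => hxt (interior_subset hxi)
      exact hdisj x hxs ⟨hxc, hxi⟩)
  obtain ⟨x, _, hxi, hxc⟩ := key
  exact hxc (interior_subset_closure hxi)

/-- If `‖T_m(X) - X‖ → 0` in probability, then the Bayes error of `(T_m(X), Y)` converges to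
the Bayes error of `(X, Y)`. -/
theorem bayesError_tendsto_of_distortion_tendsto_zero
    {Ω : Type*} [MeasurableSpace Ω] (μ : Measure Ω) [IsProbabilityMeasure μ]
    {d : ℕ} (X : Ω → EuclideanSpace ℝ (Fin d)) (Y : Ω → Bool)
    (hX : Measurable X) (hY : Measurable Y)
    (T : ℕ → EuclideanSpace ℝ (Fin d) → EuclideanSpace ℝ (Fin d))
    (hT : ∀ m, Measurable (T m))
    (hdist : ∀ ε : ℝ, 0 < ε →
      Tendsto (fun m => μ {ω | ε ≤ ‖T m (X ω) - X ω‖}) atTop (nhds 0)) :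
    Tendsto (fun m => bayesError μ (fun ω => T m (X ω)) Y) atTop
      (nhds (bayesError μ X Y)) := by
  classical
  set L := bayesError μ X Y with hLdef
  -- the Bayes error is finite
  have hLtop : L ≠ ⊤ :=
    ne_top_of_le_ne_top (measure_ne_top μ _)
      (iInf_le _ (⟨fun _ => true, measurable_const⟩ :
        {g : EuclideanSpace ℝ (Fin d) → Bool // Measurable g}))
  -- lower bound: L ≤ bayesError of the transformed pair
  have hlow : ∀ m, L ≤ bayesError μ (fun ω => T m (X ω)) Y := by
    intro m
    refine le_iInf fun g => ?_
    exact iInf_le_of_le ⟨g.1 ∘ T m, g.2.comp (hT m)⟩ le_rfl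
  -- the pushforward measure
  set ν : Measure (EuclideanSpace ℝ (Fin d)) := Measure.map X μ with hνdef
  have hνprob : IsProbabilityMeasure ν := Measure.isProbabilityMeasure_map hX.aemeasurable
  rw [ENNReal.tendsto_nhds hLtop]
  intro ε hε
  set δ' : ENNReal := ε / 5 with hδ'def
  have hδ'0 : δ' ≠ 0 := by
    simp only [hδ'def, ne_eq, ENNReal.div_eq_zero_iff]
    push_neg
    exact ⟨hε.ne', by norm_num⟩
  -- choose a near-optimal classifier g
  have hLlt : L < L + δ' := ENNReal.lt_add_right hLtop hδ'0
  have hLlt' : (⨅ g : {g : EuclideanSpace ℝ (Fin d) → Bool // Measurable g},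
      μ {ω | g.1 (X ω) ≠ Y ω}) < L + δ' := hLlt
  obtain ⟨g, hg⟩ := iInf_lt_iff.mp hLlt'
  set A : Set (EuclideanSpace ℝ (Fin d)) := g.1 ⁻¹' {true} with hAdef
  have hAmeas : MeasurableSet A := g.2 (measurableSet_singleton true)
  -- regularity: compact inside, open outside
  obtain ⟨K, hKA, hKcomp, hKmeas⟩ :=
    hAmeas.exists_isCompact_diff_lt (measure_ne_top ν A) hδ'0
  obtain ⟨U, hAU, hUopen, -, hUmeas⟩ :=
    hAmeas.exists_isOpen_diff_lt (measure_ne_top ν A) hδ'0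
  obtain ⟨r, hr0, hrsub⟩ := hKcomp.exists_thickening_subset_open hUopen (hKA.trans hAU)
  -- a thickening of K with null frontier
  obtain ⟨r', hr'mem, hr'null⟩ := exists_null_frontier_thickening ν K (half_pos hr0)
  set A' : Set (EuclideanSpace ℝ (Fin d)) := Metric.thickening r' K with hA'def
  have hA'open : IsOpen A' := Metric.isOpen_thickening
  have hKA' : K ⊆ A' := Metric.self_subset_thickening hr'mem.1 K
  have hA'U : A' ⊆ U :=
    (Metric.thickening_mono (hr'mem.2.trans (half_lt_self hr0)).le K).trans hrsub
  set F : Set (EuclideanSpace ℝ (Fin d)) := frontier A' with hFdef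
  have hFclosed : IsClosed F := isClosed_frontier
  -- choose δ > 0 so that the δ-cthickening of the frontier has small measure
  have htend : Tendsto (fun δ => ν (Metric.cthickening δ F)) (nhds 0) (nhds 0) := by
    have := tendsto_measure_cthickening_of_isClosed (μ := ν) (s := F)
      ⟨1, one_pos, measure_ne_top ν _⟩ hFclosed
    rwa [hr'null] at this
  have hev : ∀ᶠ δ in nhdsWithin (0:ℝ) (Set.Ioi 0),
      ν (Metric.cthickening δ F) < δ' := by
    exact (htend.mono_left nhdsWithin_le_nhds).eventually_lt_const
      (pos_iff_ne_zero.mpr hδ'0)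
  obtain ⟨δ, hδF, hδpos⟩ := (hev.and self_mem_nhdsWithin).exists
  -- the perturbed classifier
  set g' : EuclideanSpace ℝ (Fin d) → Bool := fun x => decide (x ∈ A') with hg'def
  have hg'meas : Measurable g' := by
    apply measurable_to_countable'
    intro y
    cases y
    · have : g' ⁻¹' {false} = A'ᶜ := by
        ext x; simp [hg'def]
      rw [this]; exact hA'open.measurableSet.compl
    · have : g' ⁻¹' {true} = A' := by
        ext x; simp [hg'def]
      rw [this]; exact hA'open.measurableSet
  -- bound on the symmetric difference term
  have hsym : μ {ω | g' (X ω) ≠ g.1 (X ω)} ≤ 2 * δ' := by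
    have hsub : {ω | g' (X ω) ≠ g.1 (X ω)} ⊆ X ⁻¹' (U \ K) := by
      intro ω hω
      simp only [Set.mem_setOf_eq, hg'def, ne_eq] at hω
      by_cases hx : X ω ∈ A'
      · have hgx : g.1 (X ω) ≠ true := by
          intro hgt
          exact hω (by simp [hx, hgt])
        have hxA : X ω ∉ A := fun h => hgx h
        exact ⟨hA'U hx, fun hK => hxA (hKA hK)⟩
      · have hgx : g.1 (X ω) = true := by
          by_contra hgt
          exact hω (by simp [hx, Bool.eq_false_iff.mpr hgt])
        exact ⟨hAU hgx, fun hK => hx (hKA' hK)⟩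
    calc μ {ω | g' (X ω) ≠ g.1 (X ω)} ≤ μ (X ⁻¹' (U \ K)) := measure_mono hsub
      _ = ν (U \ K) := (Measure.map_apply hX
            (hUopen.measurableSet.diff hKcomp.isClosed.measurableSet)).symm
      _ ≤ ν ((U \ A) ∪ (A \ K)) := by
          refine measure_mono fun x hx => ?_
          by_cases hxA : x ∈ A
          · exact Or.inr ⟨hxA, hx.2⟩
          · exact Or.inl ⟨hx.1, hxA⟩
      _ ≤ ν (U \ A) + ν (A \ K) := measure_union_le _ _
      _ ≤ δ' + δ' := add_le_add hUmeas.le hKmeas.le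
      _ = 2 * δ' := (two_mul δ').symm
  -- main eventual bound
  have hmain : ∀ᶠ m in atTop, bayesError μ (fun ω => T m (X ω)) Y ≤ L + ε := by
    have hdistev : ∀ᶠ m in atTop, μ {ω | δ ≤ ‖T m (X ω) - X ω‖} < δ' :=
      (hdist δ hδpos).eventually_lt_const (pos_iff_ne_zero.mpr hδ'0)
    filter_upwards [hdistev] with m hm
    -- flip bound: if the classifier value changes, either the move is large or we are
    -- close to the frontier of A'
    have hflip : {ω | g' (T m (X ω)) ≠ g' (X ω)} ⊆
        {ω | δ ≤ ‖T m (X ω) - X ω‖} ∪ X ⁻¹' (Metric.cthickening δ F) := by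
      intro ω hω
      by_cases hbig : δ ≤ ‖T m (X ω) - X ω‖
      · exact Or.inl hbig
      · push_neg at hbig
        right
        set a := X ω
        set b := T m (X ω)
        simp only [Set.mem_setOf_eq, hg'def, ne_eq, decide_eq_decide] at hω
        have hiff := not_iff.mp hω
        have hseg : IsPreconnected (segment ℝ a b) := (convex_segment a b).isPreconnected
        have hmem : (segment ℝ a b ∩ A').Nonempty ∧ (segment ℝ a b \ A').Nonempty := by
          by_cases hb : b ∈ A'
          · have ha : a ∉ A' := fun ha => hiff.mpr ha hb
            exact ⟨⟨b, right_mem_segment ℝ a b, hb⟩, ⟨a, left_mem_segment ℝ a b, ha⟩⟩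
          · have ha : a ∈ A' := hiff.mp hb
            exact ⟨⟨a, left_mem_segment ℝ a b, ha⟩, ⟨b, right_mem_segment ℝ a b, hb⟩⟩
        obtain ⟨y, hyseg, hyF⟩ := aux_inter_frontier_nonempty hseg hmem.1 hmem.2
        have hyball : y ∈ Metric.closedBall a (dist a b) := by
          refine (convex_closedBall a (dist a b)).segment_subset
            (Metric.mem_closedBall_self dist_nonneg) ?_ hyseg
          simp [Metric.mem_closedBall, dist_comm]
        have hdistab : dist a b < δ := by
          rw [dist_comm, dist_eq_norm]
          exact hbig
        have hay : dist a y ≤ dist a b := by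
          rw [dist_comm]; exact Metric.mem_closedBall.mp hyball
        have : dist a y ≤ δ := le_of_lt (lt_of_le_of_lt hay hdistab)
        exact Metric.mem_cthickening_of_dist_le a y δ F hyF this
    -- assemble the bound
    have hsplit : {ω | g' (T m (X ω)) ≠ Y ω} ⊆
        {ω | g.1 (X ω) ≠ Y ω} ∪ ({ω | g' (X ω) ≠ g.1 (X ω)} ∪
          {ω | g' (T m (X ω)) ≠ g' (X ω)}) := by
      intro ω hω
      by_cases h1 : g.1 (X ω) = Y ω
      · by_cases h2 : g' (X ω) = g.1 (X ω)
        · exact Or.inr (Or.inr fun h3 => hω (h3.trans (h2.trans h1)))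
        · exact Or.inr (Or.inl h2)
      · exact Or.inl h1
    have hcth : μ (X ⁻¹' Metric.cthickening δ F) ≤ δ' := by
      rw [Measure.map_apply hX Metric.isClosed_cthickening.measurableSet] at hδF
      exact hδF.le
    calc bayesError μ (fun ω => T m (X ω)) Y
        ≤ μ {ω | g' (T m (X ω)) ≠ Y ω} :=
          iInf_le _ (⟨g', hg'meas⟩ : {g : EuclideanSpace ℝ (Fin d) → Bool // Measurable g})
      _ ≤ μ ({ω | g.1 (X ω) ≠ Y ω} ∪ ({ω | g' (X ω) ≠ g.1 (X ω)} ∪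
            {ω | g' (T m (X ω)) ≠ g' (X ω)})) := measure_mono hsplit
      _ ≤ μ {ω | g.1 (X ω) ≠ Y ω} + (μ {ω | g' (X ω) ≠ g.1 (X ω)} +
            μ {ω | g' (T m (X ω)) ≠ g' (X ω)}) :=
          (measure_union_le _ _).trans (add_le_add le_rfl (measure_union_le _ _))
      _ ≤ (L + δ') + (2 * δ' + (μ {ω | δ ≤ ‖T m (X ω) - X ω‖} +
            μ (X ⁻¹' Metric.cthickening δ F))) := by
          refine add_le_add hg.le (add_le_add hsym ?_)
          exact (measure_mono hflip).trans (measure_union_le _ _)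
      _ ≤ (L + δ') + (2 * δ' + (δ' + δ')) :=
          add_le_add le_rfl (add_le_add le_rfl (add_le_add hm.le hcth))
      _ = L + 5 * δ' := by ring
      _ ≤ L + ε := by
          refine add_le_add le_rfl ?_
          rw [hδ'def, mul_comm, ENNReal.div_mul_cancel (by norm_num) (by norm_num)]
  -- combine upper and lower bounds
  filter_upwards [hmain] with m hm
  exact ⟨le_trans tsub_le_self (hlow m), hm⟩
end

section
/- Fix ε > 0 and let Z_1, …, Z_N be i.i.d. real-valued random variables with a continuous cumulative distribution function F. Split the sample at its empirical median m̂, and call the cut 'bad' if one of the two resulting halves carries true probability mass exceeding √(1+ε)/2, i.e., if max(F(m̂), 1 − F(m̂)) > √(1+ε)/2. Then P(the cut is bad) ≤ 2·exp( −(1/2)·N·(√(1+ε) − 1)² ). -/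
/-!
Write `√(1+ε)/2 = 1/2 + δ`. As `F` is continuous, it takes the values `1/2 + δ` and `1/2 - δ`
at some points `t` and `t'`. If `F(m̂) > 1/2 + δ`, then `t < m̂`, so at most half of the sample
lies in `(-∞, t]`, although each sample point lands there with probability `1/2 + δ`. If
`F(m̂) < 1/2 - δ`, then `m̂ < t'`, so at least half of the sample lies in `(-∞, t']`, which has
probability `1/2 - δ`. Either way a binomial count deviates from its mean by at least `Nδ`,
which by Hoeffding's inequality has probability at most `exp(-2Nδ²) = exp(-N(√(1+ε)-1)²/2)`.
-/

open MeasureTheory Filter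

/-- The empirical median of a finite multiset of reals: the `⌈N/2⌉`-th order statistic,
i.e. the entry at (0-based) index `⌈N/2⌉ - 1 = (N+1)/2 - 1` of the sorted list of values. -/
noncomputable def empMedian (s : Multiset ℝ) : ℝ :=
  (s.sort (· ≤ ·)).getD ((Multiset.card s + 1) / 2 - 1) 0

open ProbabilityTheory Finset Real

namespace List

variable {α : Type*} [LinearOrder α] {l : List α}

lemma SortedLE.lt_countP_le_getElem (hl : l.SortedLE) {j : ℕ} (hj : j < l.length) :
    j < l.countP (· ≤ l[j]) := by
  have htake : (l.take (j + 1)).countP (· ≤ l[j]) = j + 1 := by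
    rw [countP_eq_length.mpr, length_take]
    · omega
    · intro x hx
      obtain ⟨i, hi, rfl⟩ := mem_take_iff_getElem.mp hx
      simpa using hl.getElem_le_getElem_of_le (i := i) (j := j) (by omega)
  have hprefix := (take_sublist (j + 1) l).countP_le (p := (· ≤ l[j]))
  omega

lemma SortedLE.countP_lt_getElem_le (hl : l.SortedLE) {j : ℕ} (hj : j < l.length) :
    l.countP (· < l[j]) ≤ j := by
  have hdrop : (l.drop j).countP (· < l[j]) = 0 := by
    rw [countP_eq_zero]
    intro x hx
    obtain ⟨i, hi, rfl⟩ := mem_iff_getElem.mp hx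
    simpa using hl.getElem_le_getElem_of_le (i := j) (j := j + i) (by omega)
  have hsplit := countP_append (p := (· < l[j])) (l₁ := l.take j) (l₂ := l.drop j)
  rw [take_append_drop, hdrop] at hsplit
  have hprefix := (countP_le_length (p := (· < l[j]))).trans (length_take_le j l)
  omega

end List

namespace Multiset

lemma countP_sort {α : Type*} [LinearOrder α] (s : Multiset α) (p : α → Prop) [DecidablePred p] :
    (s.sort (· ≤ ·)).countP p = s.countP p := by
  conv_rhs => rw [← sort_eq s (· ≤ ·)]
  rw [coe_countP]

lemma countP_map_univ_val {α ι : Type*} [Fintype ι] (f : ι → α) (p : α → Prop)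
    [DecidablePred p] : (univ.val.map f).countP p = #{i | p (f i)} :=
  countP_map f _ p

end Multiset

section EmpiricalMedian

open Multiset

lemma card_le_two_mul_countP_le_empMedian (s : Multiset ℝ) :
    card s ≤ 2 * s.countP (· ≤ empMedian s) := by
  rcases Nat.eq_zero_or_pos (card s) with h | h
  · simp [h]
  have hk : (card s + 1) / 2 - 1 < (s.sort (· ≤ ·)).length := by rw [Multiset.length_sort]; omega
  have hmedian := (pairwise_sort s _).sortedLE.lt_countP_le_getElem hk
  rw [empMedian, List.getD_eq_getElem _ _ hk, ← countP_sort]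
  omega

lemma two_mul_countP_lt_empMedian_le_card (s : Multiset ℝ) :
    2 * s.countP (· < empMedian s) ≤ card s := by
  rcases Nat.eq_zero_or_pos (card s) with h | h
  · simp [card_eq_zero.mp h]
  have hk : (card s + 1) / 2 - 1 < (s.sort (· ≤ ·)).length := by rw [Multiset.length_sort]; omega
  have hmedian := (pairwise_sort s _).sortedLE.countP_lt_getElem_le hk
  rw [empMedian, List.getD_eq_getElem _ _ hk, ← countP_sort]
  omega

variable {ι : Type*} [Fintype ι] (f : ι → ℝ)

lemma card_le_two_mul_card_le_empMedian :
    Fintype.card ι ≤ 2 * #{i | f i ≤ empMedian (univ.val.map f)} := by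
  simpa [countP_map_univ_val] using card_le_two_mul_countP_le_empMedian (univ.val.map f)

lemma two_mul_card_lt_empMedian_le_card :
    2 * #{i | f i < empMedian (univ.val.map f)} ≤ Fintype.card ι := by
  simpa [countP_map_univ_val] using two_mul_countP_lt_empMedian_le_card (univ.val.map f)

end EmpiricalMedian

section Hoeffding

variable {Ω ι : Type*} [MeasurableSpace Ω] {μ : Measure Ω}

lemma measureReal_sum_ge_le_of_hasSubgaussianMGF_quarter {Y : ι → Ω → ℝ}
    (hindep : iIndepFun Y μ) (hY : ∀ i, HasSubgaussianMGF (Y i) (1 / 4) μ) (s : Finset ι)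
    {δ : ℝ} (hδ : 0 ≤ δ) :
    μ.real {ω | #s * δ ≤ ∑ i ∈ s, Y i ω} ≤ exp (-2 * #s * δ ^ 2) := by
  refine (HasSubgaussianMGF.measure_sum_ge_le_of_iIndepFun hindep (fun i _ => hY i)
    (by positivity)).trans_eq ?_
  rcases eq_or_ne #s 0 with h | h
  · simp [h]
  · push_cast [sum_const, nsmul_eq_mul]
    field_simp
    ring_nf

variable [IsProbabilityMeasure μ] {X : ι → Ω → ℝ}
  (hX : ∀ i, AEMeasurable (X i) μ) (h01 : ∀ i, ∀ᵐ ω ∂μ, X i ω ∈ Set.Icc 0 1)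
include hX h01

lemma hasSubgaussianMGF_sub_integral_of_mem_Icc (i : ι) :
    HasSubgaussianMGF (fun ω => X i ω - μ[X i]) (1 / 4) μ := by
  convert hasSubgaussianMGF_of_mem_Icc (hX i) (h01 i) using 1
  ext
  norm_num

variable (hindep : iIndepFun X μ)
include hindep

lemma measureReal_sum_sub_integral_ge_le (s : Finset ι) {δ : ℝ} (hδ : 0 ≤ δ) :
    μ.real {ω | #s * δ ≤ ∑ i ∈ s, (X i ω - μ[X i])} ≤ exp (-2 * #s * δ ^ 2) :=
  measureReal_sum_ge_le_of_hasSubgaussianMGF_quarter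
    (hindep.comp (fun i y => y - ∫ ω, X i ω ∂μ) fun _ => measurable_id.sub_const _)
    (hasSubgaussianMGF_sub_integral_of_mem_Icc hX h01) s hδ

lemma measureReal_sum_integral_sub_ge_le (s : Finset ι) {δ : ℝ} (hδ : 0 ≤ δ) :
    μ.real {ω | #s * δ ≤ ∑ i ∈ s, (μ[X i] - X i ω)} ≤ exp (-2 * #s * δ ^ 2) :=
  measureReal_sum_ge_le_of_hasSubgaussianMGF_quarter
    (hindep.comp (fun i y => ∫ ω, X i ω ∂μ - y) fun _ => measurable_const.sub measurable_id)
    (fun i => (hasSubgaussianMGF_sub_integral_of_mem_Icc hX h01 i).neg.congr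
      (ae_of_all _ fun _ => neg_sub _ _)) s hδ

end Hoeffding

section EmpiricalCDF

variable {Ω ι : Type*} {Z : ι → Ω → ℝ}

lemma sum_indicator_preimage_Iic [Fintype ι] (c : ℝ) (ω : Ω) :
    ∑ i, (Z i ⁻¹' Set.Iic c).indicator 1 ω = (#{i | Z i ω ≤ c} : ℝ) := by
  classical
  simp [Set.indicator_apply]

variable [MeasurableSpace Ω] {μ : Measure Ω} {ν : Measure ℝ} [IsProbabilityMeasure ν]
  (hZ : ∀ i, Measurable (Z i)) (hid : ∀ i, μ.map (Z i) = ν)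
include hZ hid

lemma integral_indicator_preimage_Iic (c : ℝ) (i : ι) :
    μ[(Z i ⁻¹' Set.Iic c).indicator 1] = cdf ν c := by
  rw [integral_indicator_one (hZ i measurableSet_Iic),
    ← map_measureReal_apply (hZ i) measurableSet_Iic, hid, cdf_eq_real]

variable [IsProbabilityMeasure μ] [Fintype ι] (hindep : iIndepFun Z μ)
include hindep

lemma measureReal_cdf_add_le_card_le (c : ℝ) {δ : ℝ} (hδ : 0 ≤ δ) :
    μ.real {ω | Fintype.card ι * (cdf ν c + δ) ≤ #{i | Z i ω ≤ c}}
      ≤ exp (-2 * Fintype.card ι * δ ^ 2) := by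
  have hoeffding := measureReal_sum_sub_integral_ge_le
    (X := fun i => (Z i ⁻¹' Set.Iic c).indicator 1)
    (fun i => (measurable_one.indicator (hZ i measurableSet_Iic)).aemeasurable)
    (fun i => ae_of_all _ fun ω => by by_cases h : Z i ω ≤ c <;> simp [h])
    (hindep.comp _ fun _ => measurable_one.indicator measurableSet_Iic) univ hδ
  simp only [sum_sub_distrib, sum_indicator_preimage_Iic, integral_indicator_preimage_Iic hZ hid,
    sum_const, card_univ, nsmul_eq_mul] at hoeffding
  refine (measureReal_mono fun ω hω => ?_).trans hoeffding
  rw [Set.mem_ofPred_eq] at hω ⊢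
  linarith

lemma measureReal_card_le_cdf_sub_le (c : ℝ) {δ : ℝ} (hδ : 0 ≤ δ) :
    μ.real {ω | (#{i | Z i ω ≤ c} : ℝ) ≤ Fintype.card ι * (cdf ν c - δ)}
      ≤ exp (-2 * Fintype.card ι * δ ^ 2) := by
  have hoeffding := measureReal_sum_integral_sub_ge_le
    (X := fun i => (Z i ⁻¹' Set.Iic c).indicator 1)
    (fun i => (measurable_one.indicator (hZ i measurableSet_Iic)).aemeasurable)
    (fun i => ae_of_all _ fun ω => by by_cases h : Z i ω ≤ c <;> simp [h])
    (hindep.comp _ fun _ => measurable_one.indicator measurableSet_Iic) univ hδ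
  simp only [sum_sub_distrib, sum_indicator_preimage_Iic, integral_indicator_preimage_Iic hZ hid,
    sum_const, card_univ, nsmul_eq_mul] at hoeffding
  refine (measureReal_mono fun ω hω => ?_).trans hoeffding
  rw [Set.mem_ofPred_eq] at hω ⊢
  linarith

end EmpiricalCDF

lemma exists_cdf_eq_of_continuous {ν : Measure ℝ} [IsProbabilityMeasure ν]
    (hcont : Continuous (cdf ν)) {y : ℝ} (hy : y ∈ Set.Ioo 0 1) : ∃ t, cdf ν t = y :=
  mem_range_of_exists_le_of_exists_ge hcont
    ((tendsto_cdf_atBot ν).eventually_le_const hy.1).exists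
    ((tendsto_cdf_atTop ν).eventually_const_le hy.2).exists

section MedianCut

variable {Ω ι : Type*} [MeasurableSpace Ω] {μ : Measure Ω} [IsProbabilityMeasure μ] [Fintype ι]
  {Z : ι → Ω → ℝ} {ν : Measure ℝ} [IsProbabilityMeasure ν]
  (hZ : ∀ i, Measurable (Z i)) (hid : ∀ i, μ.map (Z i) = ν) (hindep : iIndepFun Z μ)
  (hcont : Continuous (cdf ν)) {δ : ℝ} (hδ : 0 ≤ δ)
include hZ hid hindep hcont hδ

lemma measureReal_half_add_lt_cdf_empMedian_le :
    μ.real {ω | 1 / 2 + δ < cdf ν (empMedian (univ.val.map fun i => Z i ω))}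
      ≤ exp (-2 * Fintype.card ι * δ ^ 2) := by
  rcases lt_or_ge (1 / 2 + δ) 1 with hlt | hge
  swap
  · have hempty : {ω | 1 / 2 + δ < cdf ν (empMedian (univ.val.map fun i => Z i ω))} = ∅ :=
      Set.eq_empty_of_forall_notMem fun ω hω => (hge.trans_lt hω).not_ge (cdf_le_one ν _)
    rw [hempty, measureReal_empty]
    positivity
  obtain ⟨t, ht⟩ := exists_cdf_eq_of_continuous hcont ⟨by linarith, hlt⟩
  refine (measureReal_mono fun ω hω => ?_).trans
    (measureReal_card_le_cdf_sub_le hZ hid hindep t hδ)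
  have hmedian := two_mul_card_lt_empMedian_le_card fun i => Z i ω
  set m := empMedian (univ.val.map fun i => Z i ω)
  have htm : t < m := (monotone_cdf ν).reflect_lt (ht ▸ hω)
  have hcount : #{i | Z i ω ≤ t} ≤ #{i | Z i ω < m} :=
    card_le_card (monotone_filter_right _ fun _ _ h => h.trans_lt htm)
  have hhalf : (2 * #{i | Z i ω ≤ t} : ℝ) ≤ Fintype.card ι := by exact_mod_cast (by omega)
  rw [Set.mem_ofPred_eq, ht]
  linarith

lemma measureReal_cdf_empMedian_lt_half_sub_le :
    μ.real {ω | cdf ν (empMedian (univ.val.map fun i => Z i ω)) < 1 / 2 - δ}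
      ≤ exp (-2 * Fintype.card ι * δ ^ 2) := by
  rcases lt_or_ge 0 (1 / 2 - δ) with hlt | hge
  swap
  · have hempty : {ω | cdf ν (empMedian (univ.val.map fun i => Z i ω)) < 1 / 2 - δ} = ∅ :=
      Set.eq_empty_of_forall_notMem fun ω hω => (hω.trans_le hge).not_ge (cdf_nonneg ν _)
    rw [hempty, measureReal_empty]
    positivity
  obtain ⟨t, ht⟩ := exists_cdf_eq_of_continuous hcont ⟨hlt, by linarith⟩
  refine (measureReal_mono fun ω hω => ?_).trans
    (measureReal_cdf_add_le_card_le hZ hid hindep t hδ)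
  have hmedian := card_le_two_mul_card_le_empMedian fun i => Z i ω
  set m := empMedian (univ.val.map fun i => Z i ω)
  have hmt : m < t := (monotone_cdf ν).reflect_lt (ht ▸ hω)
  have hcount : #{i | Z i ω ≤ m} ≤ #{i | Z i ω ≤ t} :=
    card_le_card (monotone_filter_right _ fun _ _ h => h.trans hmt.le)
  have hhalf : (Fintype.card ι : ℝ) ≤ 2 * #{i | Z i ω ≤ t} := by exact_mod_cast (by omega)
  rw [Set.mem_ofPred_eq, ht]
  linarith

end MedianCut

/-- For `N` i.i.d. real random variables with a continuous CDF `F`, the probability that the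
split at the empirical median `m̂` is 'bad', i.e. that one of the two halves carries true
probability mass exceeding `√(1+ε)/2`, is at most `2·exp(-(1/2)·N·(√(1+ε) - 1)²)`. -/
theorem bad_median_cut_probability_bound
    {Ω : Type*} [MeasurableSpace Ω] (μ : Measure Ω) [IsProbabilityMeasure μ]
    (ε : ℝ) (hε : 0 < ε) (N : ℕ)
    (Z : Fin N → Ω → ℝ) (hZmeas : ∀ i, Measurable (Z i))
    (ν : Measure ℝ) [IsProbabilityMeasure ν]
    (hid : ∀ i, Measure.map (Z i) μ = ν)
    (hindep : ProbabilityTheory.iIndepFun Z μ)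
    (F : ℝ → ℝ) (hF : ∀ t, F t = (ν (Set.Iic t)).toReal) (hFcont : Continuous F) :
    μ {ω | Real.sqrt (1 + ε) / 2 <
        max (F (empMedian (Finset.univ.val.map fun i => Z i ω)))
            (1 - F (empMedian (Finset.univ.val.map fun i => Z i ω)))}
      ≤ ENNReal.ofReal (2 * Real.exp (-(1 / 2) * N * (Real.sqrt (1 + ε) - 1) ^ 2)) := by
  obtain rfl : F = cdf ν := funext fun t => by rw [hF, cdf_eq_real, measureReal_def]
  set δ := (√(1 + ε) - 1) / 2
  have hδ : 0 ≤ δ := by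
    have : 1 ≤ √(1 + ε) := one_le_sqrt.mpr (by linarith)
    positivity
  have hsplit : {ω | √(1 + ε) / 2 < max (cdf ν (empMedian (univ.val.map fun i => Z i ω)))
      (1 - cdf ν (empMedian (univ.val.map fun i => Z i ω)))} ⊆
      {ω | 1 / 2 + δ < cdf ν (empMedian (univ.val.map fun i => Z i ω))} ∪
      {ω | cdf ν (empMedian (univ.val.map fun i => Z i ω)) < 1 / 2 - δ} := by
    intro ω hω
    rcases lt_max_iff.mp (Set.mem_ofPred_eq.mp hω) with h | h
    · exact Or.inl (by simp only [Set.mem_ofPred_eq, δ]; linarith)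
    · exact Or.inr (by simp only [Set.mem_ofPred_eq, δ]; linarith)
  have hupper := measureReal_half_add_lt_cdf_empMedian_le hZmeas hid hindep hFcont hδ
  have hlower := measureReal_cdf_empMedian_lt_half_sub_le hZmeas hid hindep hFcont hδ
  rw [Fintype.card_fin] at hupper hlower
  rw [← ofReal_measureReal]
  refine ENNReal.ofReal_le_ofReal ((measureReal_mono hsplit).trans
    ((measureReal_union_le _ _).trans ((add_le_add hupper hlower).trans_eq ?_)))
  rw [← two_mul]
  congr 2
  simp only [δ]
  ring
end
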